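/- Let h: ℕ→ℕ be a strictly increasing function and α, β < ε₀ be ordinals such that α + β = α ⊕ β (where ⊕ denotes the natural, or Hessenberg, sum; equivalently, the concatenation of the Cantor normal forms of α and β is itself a Cantor normal form). Then for all x ∈ ℕ, h^{α+β}(x) = h^α(h^β(x)). -/

import Mathlib

open ONote Ordinal

/-- Natural (Hessenberg) addition of ordinals, as formerly in Mathlib (`Ordinal.nadd`). -/
noncomputable def Ordinal.nadd : Ordinal.{u} → Ordinal.{u} → Ordinal.{u}
  | a, b =>
    max (blsub.{u, u} a fun a' _ => Ordinal.nadd a' b) (blsub.{u, u} b fun b' _ => Ordinal.nadd a b')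
termination_by o₁ o₂ => (o₁, o₂)

infixl:65 " ♯ " => Ordinal.nadd

/-- The Hardy hierarchy `h^α`: `h^0(x) = x`, `h^{α+1}(x) = h^α(h(x))`,
`h^λ(x) = h^{λ(x)}(x)`. -/
def Hardy (h : ℕ → ℕ) : ONote → ℕ → ℕ
  | o =>
    match fundamentalSequence o, fundamentalSequence_has_prop o with
    | Sum.inl none, _ => id
    | Sum.inl (some a), hp =>
      have : a < o := by rw [lt_def, hp.1]; exact Order.lt_succ _
      fun x => Hardy h a (h x)
    | Sum.inr f, hp => fun x =>
      have : f x < o := (hp.2.1 x).2.1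
      Hardy h (f x) x
  termination_by o => o

/-!
Write `α = α' + ω ^ x` with `ω ^ x` the last term of its Cantor normal form. If `β ≥ ω ^ (x + 1)`
then `ω ^ x` is absorbed by `β`, and `α + β = α' + β ≤ α' ♯ β < α ♯ β`; so `α + β = α ♯ β`
forces `β < ω ^ (x + 1)`, a condition inherited by every `γ ≤ β`. Under it, `α + β` is the
successor of `α + γ` when `β` is that of `γ`, and the fundamental sequence of a limit `α + β` is
`i ↦ α + β[i]`: the sequence of `β` only rewrites the last term of `β`, which remains the last
term of `α + β` even when it merges with the last term of `α`. Induction on `β` along the three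
clauses of the Hardy hierarchy then gives `h^(α+β) = h^α ∘ h^β`.
-/

namespace Ordinal

set_option linter.deprecated false in
theorem nadd_lt_nadd_left {b c : Ordinal} (h : b < c) (a : Ordinal) : a ♯ b < a ♯ c := by
  conv_rhs => rw [Ordinal.nadd]
  exact lt_max_of_lt_right (lt_blsub (fun b' _ => a ♯ b') b h)

set_option linter.deprecated false in
theorem nadd_lt_nadd_right {a b : Ordinal} (h : a < b) (c : Ordinal) : a ♯ c < b ♯ c := by
  conv_rhs => rw [Ordinal.nadd]
  exact lt_max_of_lt_left (lt_blsub (fun a' _ => a' ♯ c) a h)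

theorem add_le_of_strictMono {f : Ordinal → Ordinal} (hf : StrictMono f) (b : Ordinal) :
    f 0 + b ≤ f b := by
  induction b using WellFoundedLT.induction with
  | _ b ih =>
  refine le_of_forall_lt fun c hc => ?_
  rcases lt_or_ge c (f 0) with hc0 | hc0
  · exact hc0.trans_le (hf.monotone zero_le)
  · rw [← Ordinal.add_sub_cancel_of_le hc0] at hc ⊢
    have hb : c - f 0 < b := (add_lt_add_iff_left _).1 hc
    exact (ih _ hb).trans_lt (hf hb)

theorem add_le_nadd (a b : Ordinal) : a + b ≤ a ♯ b :=
  calc a + b ≤ a ♯ 0 + b := by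
        gcongr; exact StrictMono.le_apply fun _ _ h => nadd_lt_nadd_right h 0
    _ ≤ a ♯ b := add_le_of_strictMono (fun _ _ h => nadd_lt_nadd_left h a) b

theorem add_add_lt_nadd_of_add_eq {a b c : Ordinal} (hc : 0 < c) (hcb : c + b = b) :
    a + c + b < (a + c) ♯ b :=
  calc a + c + b = a + b := by rw [add_assoc, hcb]
    _ ≤ a ♯ b := add_le_nadd a b
    _ < (a + c) ♯ b := nadd_lt_nadd_right (lt_add_of_pos_right a hc) b

/-- In any decomposition `a = c + ω ^ x`, `x` is the last exponent in the Cantor normal form of `a`,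
so this says that the Cantor normal forms of `a` and `b` concatenate to that of `a + b`. -/
def ConcatCNF (a b : Ordinal) : Prop :=
  ∀ (c x : Ordinal), a = c + ω ^ x → b < ω ^ Order.succ x

namespace ConcatCNF

theorem of_add_eq_nadd {a b : Ordinal} (h : a + b = a ♯ b) : ConcatCNF a b := by
  rintro c x rfl
  by_contra! hb
  have habs : ω ^ x + b = b :=
    add_of_omega0_opow_le ((opow_lt_opow_iff_right one_lt_omega0).2 (Order.lt_succ x)) hb
  exact (add_add_lt_nadd_of_add_eq (opow_pos x omega0_pos) habs).ne h

theorem mono {a b b' : Ordinal} (h : ConcatCNF a b) (hb : b' ≤ b) : ConcatCNF a b' :=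
  fun c x hc => hb.trans_lt (h c x hc)

theorem of_add_left {a a' b : Ordinal} (h : ConcatCNF (a' + a) b) : ConcatCNF a b := by
  rintro c x rfl
  exact h (a' + c) x (add_assoc _ _ _).symm

end ConcatCNF

end Ordinal

namespace ONote

theorem exists_repr_eq_add_omega0_opow {o : ONote} {b : Ordinal} (h : NFBelow o b) (ho : o ≠ 0) :
    ∃ c x, repr o = c + ω ^ x ∧ x < b := by
  induction o generalizing b with
  | zero => exact absurd rfl ho
  | oadd e n a _ iha =>
  rcases eq_or_ne a 0 with rfl | ha0
  · refine ⟨ω ^ repr e * ((n : ℕ) - 1 : ℕ), repr e, ?_, h.lt⟩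
    have hn : ((n : ℕ) : Ordinal) = ((n : ℕ) - 1 : ℕ) + 1 := by
      exact_mod_cast (Nat.sub_add_cancel n.pos).symm
    rw [repr, repr_zero, add_zero, hn, mul_add_one]
  · obtain ⟨c, x, hc, hx⟩ := iha h.snd ha0
    exact ⟨ω ^ repr e * n + c, x, by rw [repr, hc, add_assoc], hx.trans h.lt⟩

theorem _root_.Ordinal.ConcatCNF.lt_omega0_opow {o : ONote} {b B : Ordinal}
    (h : ConcatCNF (repr o) B) (ho : NFBelow o b) (ho0 : o ≠ 0) : B < ω ^ b := by
  obtain ⟨c, x, hc, hx⟩ := exists_repr_eq_add_omega0_opow ho ho0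
  exact (h c x hc).trans_le (opow_le_opow_right omega0_pos (Order.succ_le_of_lt hx))

theorem cmp_self {e : ONote} [NF e] : cmp e e = .eq :=
  (cmp_compares e e).eq_eq.2 rfl

theorem add_zero_of_nf (o : ONote) [NF o] : o + 0 = o :=
  repr_inj.1 (by rw [repr_add, repr_zero, add_zero])

theorem oadd_add_of_nfBelow {e a o : ONote} [NF e] (n : ℕ+) (h : NFBelow (a + o) (repr e)) :
    oadd e n a + o = oadd e n (a + o) := by
  rw [oadd_add]
  generalize a + o = b at h ⊢
  cases b with
  | zero => rfl
  | oadd e' n' a' =>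
    have := h.fst
    have hgt : cmp e e' = .gt := (cmp_compares e e').eq_gt.2 h.lt
    simp only [addAux, hgt]

theorem oadd_zero_add_oadd {e : ONote} [NF e] (n m : ℕ+) (a : ONote) :
    oadd e n 0 + oadd e m a = oadd e (n + m) a := by
  simp only [oadd_add, zero_add, addAux, cmp_self]

theorem fundamentalSequence_eq_inl_some {o a : ONote} [NF o] [NF a]
    (h : repr o = Order.succ (repr a)) : fundamentalSequence o = Sum.inl (some a) := by
  have hp := fundamentalSequence_has_prop o
  rcases hfs : fundamentalSequence o with (_ | b) | g <;> rw [hfs] at hp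
  · subst hp
    exact absurd h.symm (Order.succ_ne_bot _)
  · have := hp.2 inferInstance
    rw [repr_inj.1 (Order.succ_injective (hp.1.symm.trans h))]
  · exact absurd (h ▸ hp.1) (Order.not_isSuccLimit_succ _)

theorem fundamentalSequence_oadd_add_zero {e : ONote} [NF e] {m : ℕ+} {f : ℕ → ONote}
    (hf : fundamentalSequence (oadd e m 0) = Sum.inr f) (n : ℕ+) :
    fundamentalSequence (oadd e (n + m) 0) = Sum.inr fun i => oadd e n 0 + f i := by
  have hf_lt : ∀ i, NF (f i) ∧ f i < oadd e m 0 := fun i => by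
    have hp := fundamentalSequence_has_prop (oadd e m 0)
    rw [hf] at hp
    exact ⟨(hp.2.1 i).2.2 inferInstance, (hp.2.1 i).2.1⟩
  have hpred : (n + m).natPred = n.natPred + m.natPred + 1 := by
    have := n.natPred_add_one; have := m.natPred_add_one; have := (n + m).natPred_add_one
    rw [PNat.add_coe] at this
    omega
  simp only [fundamentalSequence, hpred] at hf ⊢
  -- For `m = 1` the sequence replaces `ω ^ e` by terms below it; for `m > 1` it keeps
  -- `ω ^ e * (m - 1)` in front and appends such a term.
  rcases hm : m.natPred with _ | k
  · obtain rfl : m = 1 := PNat.natPred_inj.1 hm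
    have hb : ∀ i, NFBelow (f i) (repr e) := fun i =>
      NF.below_of_lt' (by simpa [lt_def, repr] using (hf_lt i).2) (hf_lt i).1
    rcases he : fundamentalSequence e with (_ | a) | g <;>
      simp only [he, hm, reduceCtorEq, Sum.inr.injEq] at hf ⊢ <;> subst hf <;> funext i <;>
      (rw [PNat.succPNat_natPred]; exact (oadd_add_of_nfBelow (a := 0) n (hb i)).symm)
  · have hn : (n.natPred + (k + 1)).succPNat = n + k.succPNat := by
      apply PNat.eq; simp only [Nat.succPNat_coe, PNat.add_coe]; have := n.natPred_add_one; omega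
    rcases he : fundamentalSequence e with (_ | a) | g <;>
      simp only [he, hm, reduceCtorEq, Sum.inr.injEq] at hf ⊢ <;> subst hf <;> funext i <;>
      rw [oadd_zero_add_oadd, hn]

theorem fundamentalSequence_oadd_add {e b : ONote} [NF e] {m : ℕ+} {f : ℕ → ONote}
    (hf : fundamentalSequence (oadd e m b) = Sum.inr f) (n : ℕ+) :
    fundamentalSequence (oadd e (n + m) b) = Sum.inr fun i => oadd e n 0 + f i := by
  rcases hb : fundamentalSequence b with (_ | b') | g
  · have hb0 := fundamentalSequence_has_prop b
    rw [hb] at hb0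
    subst hb0
    exact fundamentalSequence_oadd_add_zero hf n
  · simp [fundamentalSequence, hb] at hf
  · simp only [fundamentalSequence, hb, Sum.inr.injEq] at hf ⊢
    subst hf
    funext i
    rw [oadd_zero_add_oadd]

theorem fundamentalSequence_add {α β : ONote} (hα : NF α) [NF β] {f : ℕ → ONote}
    (hαβ : ConcatCNF (repr α) (repr β)) (hf : fundamentalSequence β = Sum.inr f) :
    fundamentalSequence (α + β) = Sum.inr fun i => α + f i := by
  have hf_lt : ∀ i, NF (f i) ∧ f i < β := fun i => by
    have hp := fundamentalSequence_has_prop β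
    rw [hf] at hp
    exact ⟨(hp.2.1 i).2.2 inferInstance, (hp.2.1 i).2.1⟩
  induction α with
  | zero => exact hf
  | oadd e n a _ iha =>
  have := hα.fst
  by_cases hβe : repr β < ω ^ repr e
  · have := hα.snd
    have hadd : ∀ o, NF o → repr o < ω ^ repr e → oadd e n a + o = oadd e n (a + o) :=
      fun o ho hoe => oadd_add_of_nfBelow n (add_nfBelow hα.snd' (NF.below_of_lt' hoe ho))
    rw [hadd β inferInstance hβe, fundamentalSequence, iha hα.snd hαβ.of_add_left]
    dsimp only
    congr 1
    funext i
    rw [hadd (f i) (hf_lt i).1 ((lt_def.1 (hf_lt i).2).trans hβe)]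
  · obtain rfl : a = 0 := by
      by_contra ha0
      exact hβe (hαβ.of_add_left.lt_omega0_opow hα.snd' ha0)
    have hβe' : repr β < ω ^ Order.succ (repr e) :=
      hαβ.lt_omega0_opow (hα.below_of_lt (Order.lt_succ _)) (by simp)
    cases β with
    | zero => cases hf
    | oadd eb nb b =>
    have hβ : NF (oadd eb nb b) := inferInstance
    have := hβ.fst
    have heb : eb = e := by
      refine repr_inj.1 (le_antisymm ?_ (not_lt.1 fun h => hβe (hβ.below_of_lt h).repr_lt))
      exact Order.lt_succ_iff.1 <| (opow_lt_opow_iff_right one_lt_omega0).1 <|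
        (omega0_le_oadd eb nb b).trans_lt hβe'
    subst heb
    rw [oadd_zero_add_oadd]
    exact fundamentalSequence_oadd_add hf n

end ONote

theorem hardy_def {h : ℕ → ℕ} {o : ONote} {x} (e : fundamentalSequence o = x) :
    Hardy h o =
      match (motive := (x : Option ONote ⊕ (ℕ → ONote)) → FundamentalSequenceProp o x → ℕ → ℕ)
        x, e ▸ fundamentalSequence_has_prop o with
      | Sum.inl none, _ => id
      | Sum.inl (some a), _ => fun i => Hardy h a (h i)
      | Sum.inr f, _ => fun i => Hardy h (f i) i := by
  subst x
  rw [Hardy]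

theorem hardy_zero' {h : ℕ → ℕ} {o : ONote} (e : fundamentalSequence o = Sum.inl none) (x : ℕ) :
    Hardy h o x = x := by
  rw [hardy_def e]
  rfl

theorem hardy_succ {h : ℕ → ℕ} {o a : ONote} (e : fundamentalSequence o = Sum.inl (some a))
    (x : ℕ) : Hardy h o x = Hardy h a (h x) := by
  rw [hardy_def e]

theorem hardy_limit {h : ℕ → ℕ} {o : ONote} {f : ℕ → ONote}
    (e : fundamentalSequence o = Sum.inr f) (x : ℕ) : Hardy h o x = Hardy h (f x) x := by
  rw [hardy_def e]

theorem hardy_add_of_concatCNF (h : ℕ → ℕ) {α β : ONote} (hα : NF α) (hβ : NF β)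
    (hαβ : ConcatCNF (repr α) (repr β)) (x : ℕ) :
    Hardy h (α + β) x = Hardy h α (Hardy h β x) := by
  induction β using (InvImage.wf repr Ordinal.lt_wf).induction generalizing x with
  | _ β ih =>
  have hp := fundamentalSequence_has_prop β
  rcases hfs : fundamentalSequence β with (_ | γ) | f <;> rw [hfs] at hp
  · subst hp
    rw [hardy_zero' hfs, add_zero_of_nf]
  · have hγ := hp.2 hβ
    have hγβ : γ < β := by rw [lt_def, hp.1]; exact Order.lt_succ _
    have hsucc : (α + β).repr = Order.succ (α + γ).repr := by
      rw [repr_add, repr_add, hp.1, Order.succ_eq_add_one, Order.succ_eq_add_one, add_assoc]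
    rw [hardy_succ hfs, hardy_succ (fundamentalSequence_eq_inl_some hsucc),
      ih γ hγβ hγ (hαβ.mono hγβ.le)]
  · obtain ⟨-, hf_lt, -⟩ := hp
    rw [hardy_limit hfs, hardy_limit (fundamentalSequence_add hα hαβ hfs),
      ih (f x) (hf_lt x).2.1 ((hf_lt x).2.2 hβ) (hαβ.mono (hf_lt x).2.1.le)]

theorem hardy_add_of_nadd_eq_add_general (h : ℕ → ℕ) (α β : ONote)
    (hNFα : α.NF) (hNFβ : β.NF) (hnat : α.repr + β.repr = α.repr ♯ β.repr) (x : ℕ) :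
    Hardy h (α + β) x = Hardy h α (Hardy h β x) :=
  hardy_add_of_concatCNF h hNFα hNFβ (.of_add_eq_nadd hnat) x

/-- Let `h : ℕ → ℕ` be strictly increasing and `α, β < ε₀` be such that `α + β = α ⊕ β`,
where `⊕` is the natural (Hessenberg) sum.  Then `h^(α+β)(x) = h^α(h^β(x))` for all `x`. -/
theorem hardy_add_of_nadd_eq_add (h : ℕ → ℕ) (hh : StrictMono h) (α β : ONote)
    (hNFα : α.NF) (hNFβ : β.NF) (hnat : α.repr + β.repr = α.repr ♯ β.repr) (x : ℕ) :
    Hardy h (α + β) x = Hardy h α (Hardy h β x) :=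
  hardy_add_of_nadd_eq_add_general h α β hNFα hNFβ hnat x
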